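/- Let H be a complex Hilbert space and x_1,...,x_n, y_1,...,y_n ∈ H. Then ∑_{i=1}^n x_i ⊗ y_i = 0 if and only if there exist an invertible n×n complex matrix U, an integer 0 ≤ l ≤ n, vectors u_1,...,u_l ∈ H and w_{l+1},...,w_n ∈ H such that (x_1,...,x_n) = (u_1,...,u_l,0,...,0)·U and (y_1,...,y_n) = (0,...,0,w_{l+1},...,w_n)·(U*)^{-1}. -/

import Mathlib

/-!
Let `T : ℂⁿ → H` be `c ↦ ∑ cⱼ xⱼ`. Evaluating `∑ xⱼ ⊗ yⱼ` at `v` gives `T (⟪yⱼ, v⟫)ⱼ`, so the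
hypothesis says that all vectors `(⟪yⱼ, v⟫)ⱼ` lie in `ker T`. Take a basis `b` of `ℂⁿ` whose vectors
from index `l` on span `ker T`, and let `U` be the matrix expressing the standard basis in `b`.
Then `(x U⁻¹)ᵢ = T bᵢ` vanishes for `i ≥ l`, while `⟪(y Uᴴ)ᵢ, v⟫` is the `i`-th coordinate of
`(⟪yⱼ, v⟫)ⱼ ∈ ker T` in the basis `b`, which vanishes for `i < l`.

Conversely, `⊗` is sesquilinear, so `∑ (a U)ⱼ ⊗ (b (Uᴴ)⁻¹)ⱼ = ∑ aᵢ ⊗ bᵢ`, and here every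
`aᵢ ⊗ bᵢ` has a zero factor.
-/

noncomputable section

open scoped ComplexConjugate

/-- The rank-one operator `x ⊗ y : h ↦ ⟨h, y⟩ x` (inner product linear in `h`). -/
noncomputable def rankOne {H : Type*} [NormedAddCommGroup H] [InnerProductSpace ℂ H]
    (x y : H) : H →L[ℂ] H :=
  (innerSL ℂ y).smulRight x

open Module
open scoped Matrix

theorem Submodule.exists_finBasis_adapted {K V : Type*} [DivisionRing K] [AddCommGroup V]
    [Module K V] [FiniteDimensional K V] {n : ℕ} (hn : finrank K V = n) (W : Submodule K V) :
    ∃ l ≤ n, ∃ b : Basis (Fin n) K V, (∀ i : Fin n, l ≤ (i : ℕ) → b i ∈ W) ∧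
      ∀ v ∈ W, ∀ i : Fin n, (i : ℕ) < l → b.repr v i = 0 := by
  obtain ⟨C, hC⟩ := W.exists_isCompl
  have hdim : finrank K C + finrank K W = n := hn ▸ Submodule.finrank_add_eq_of_isCompl hC.symm
  let b₀ := ((finBasis K C).prod (finBasis K W)).map (C.prodEquivOfIsCompl W hC.symm)
  let e := finSumFinEquiv.trans (finCongr hdim)
  refine ⟨finrank K C, by omega, b₀.reindex e, fun i hi => ?_, fun v hv i hi => ?_⟩ <;>
    obtain ⟨j | k, rfl⟩ := e.surjective i
  · exact absurd hi (by simp [e])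
  · simp [b₀]
  · simp [b₀, (projectionOnto_apply_eq_zero_iff _).2 hv]
  · simp [e] at hi

section rowMul

variable {R M ι κ ν : Type*} [CommSemiring R] [AddCommMonoid M] [Module R M]
  [Fintype ι] [Fintype κ]

def rowMul (v : ι → M) (A : Matrix ι κ R) : κ → M := fun j => ∑ i, A i j • v i

theorem rowMul_rowMul (v : ι → M) (A : Matrix ι κ R) (B : Matrix κ ν R) :
    rowMul (rowMul v A) B = rowMul v (A * B) := by
  ext k
  simp only [rowMul, Finset.smul_sum, smul_smul, Matrix.mul_apply, Finset.sum_smul]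
  rw [Finset.sum_comm]
  simp_rw [mul_comm]

theorem rowMul_one [DecidableEq ι] (v : ι → M) : rowMul v (1 : Matrix ι ι R) = v := by
  ext j
  simp [rowMul, Matrix.one_apply]

end rowMul

section rowMulInv

variable {R M ι : Type*} [CommRing R] [AddCommMonoid M] [Module R M] [Fintype ι] [DecidableEq ι]
  {A : Matrix ι ι R}

theorem rowMul_inv_rowMul (hA : IsUnit A) (v : ι → M) : rowMul (rowMul v A⁻¹) A = v := by
  rw [rowMul_rowMul, Matrix.nonsing_inv_mul _ ((Matrix.isUnit_iff_isUnit_det A).mp hA), rowMul_one]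

theorem rowMul_rowMul_inv (hA : IsUnit A) (v : ι → M) : rowMul (rowMul v A) A⁻¹ = v := by
  rw [rowMul_rowMul, Matrix.mul_nonsing_inv _ ((Matrix.isUnit_iff_isUnit_det A).mp hA), rowMul_one]

end rowMulInv

section rankOne

variable {H ι κ : Type*} [NormedAddCommGroup H] [InnerProductSpace ℂ H] [Fintype ι]

theorem rankOne_eq_innerProductSpace_rankOne (x y : H) :
    rankOne x y = InnerProductSpace.rankOne ℂ x y :=
  rfl

theorem inner_rowMul (y : ι → H) (A : Matrix ι κ ℂ) (j : κ) (v : H) :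
    inner ℂ (rowMul y A j) v = ∑ i, conj (A i j) * inner ℂ (y i) v := by
  simp only [rowMul, sum_inner, inner_smul_left]

theorem sum_rankOne_rowMul [Fintype κ] (a b : ι → H) (U V : Matrix ι κ ℂ) :
    ∑ j, rankOne (rowMul a U j) (rowMul b V j) =
      ∑ i, ∑ k, (U * Vᴴ) i k • rankOne (a i) (b k) := by
  simp only [rankOne_eq_innerProductSpace_rankOne, rowMul, map_sum, map_smul, map_smulₛₗ,
    _root_.sum_apply, _root_.smul_apply, Matrix.mul_apply, Matrix.conjTranspose_apply,
    Finset.sum_smul, Finset.smul_sum, smul_smul]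
  rw [Finset.sum_comm]
  conv_rhs => rw [Finset.sum_comm]
  refine Finset.sum_congr rfl fun k _ => ?_
  rw [Finset.sum_comm]
  simp only [mul_comm, RCLike.star_def]

theorem sum_rankOne_rowMul_conjTranspose_inv [DecidableEq ι] {U : Matrix ι ι ℂ} (hU : IsUnit U)
    (a b : ι → H) :
    ∑ j, rankOne (rowMul a U j) (rowMul b Uᴴ⁻¹ j) = ∑ i, rankOne (a i) (b i) := by
  rw [sum_rankOne_rowMul, ← Matrix.conjTranspose_nonsing_inv, Matrix.conjTranspose_conjTranspose,
    Matrix.mul_nonsing_inv _ ((Matrix.isUnit_iff_isUnit_det U).mp hU)]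
  simp [Matrix.one_apply]

end rankOne

theorem exists_isUnit_rowMul_eq_zero_of_sum_rankOne_eq_zero {H : Type*} [NormedAddCommGroup H]
    [InnerProductSpace ℂ H] {n : ℕ} (x y : Fin n → H) (h : ∑ i, rankOne (x i) (y i) = 0) :
    ∃ (U : Matrix (Fin n) (Fin n) ℂ) (l : ℕ), IsUnit U ∧ l ≤ n ∧
      (∀ i : Fin n, l ≤ (i : ℕ) → rowMul x U⁻¹ i = 0) ∧
      ∀ i : Fin n, (i : ℕ) < l → rowMul y Uᴴ i = 0 := by
  set T := Fintype.linearCombination ℂ x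
  have hS : ∀ v, (fun j => inner ℂ (y j) v) ∈ LinearMap.ker T := fun v => by
    simpa [T, Fintype.linearCombination_apply, rankOne_eq_innerProductSpace_rankOne]
      using congr($h v)
  obtain ⟨l, hl, b, hb_mem, hb_repr⟩ :=
    (LinearMap.ker T).exists_finBasis_adapted (finrank_fin_fun ℂ)
  let e := Pi.basisFun ℂ (Fin n)
  let U := b.toMatrix e
  have hinv : U⁻¹ = e.toMatrix b := Matrix.inv_eq_left_inv (e.toMatrix_mul_toMatrix_flip b)
  have hU : IsUnit U :=
    ⟨⟨U, _, b.toMatrix_mul_toMatrix_flip e, e.toMatrix_mul_toMatrix_flip b⟩, rfl⟩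
  refine ⟨U, l, hU, hl, fun i hi => ?_, fun i hi => ext_inner_right ℂ fun v => ?_⟩
  · have : rowMul x U⁻¹ i = T (b i) := by
      simp [hinv, rowMul, T, Fintype.linearCombination_apply, Basis.toMatrix_apply, e]
    exact this ▸ hb_mem i hi
  · have : inner ℂ (rowMul y Uᴴ i) v = b.repr (fun j => inner ℂ (y j) v) i := by
      rw [inner_rowMul, ← Basis.toMatrix_mulVec_repr (b := e) (b' := b)]
      simp [Matrix.mulVec, dotProduct, e, U]
    rw [this, hb_repr _ (hS v) i hi, inner_zero_left]

theorem stmt2 {H : Type*} [NormedAddCommGroup H] [InnerProductSpace ℂ H]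
    (n : ℕ) (x y : Fin n → H) :
    (∑ i : Fin n, rankOne (x i) (y i)) = 0 ↔
      ∃ (U : Matrix (Fin n) (Fin n) ℂ) (l : ℕ) (u w : Fin n → H),
        IsUnit U ∧ l ≤ n ∧
        (∀ j : Fin n, x j = ∑ i : Fin n, U i j • (if (i : ℕ) < l then u i else 0)) ∧
        (∀ j : Fin n, y j = ∑ i : Fin n, ((U.conjTranspose)⁻¹) i j • (if (i : ℕ) < l then 0 else w i)) := by
  constructor
  · intro h
    obtain ⟨U, l, hU, hl, hx, hy⟩ := exists_isUnit_rowMul_eq_zero_of_sum_rankOne_eq_zero x y h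
    refine ⟨U, l, rowMul x U⁻¹, rowMul y Uᴴ, hU, hl, fun j => ?_, fun j => ?_⟩
    · conv_lhs => rw [← rowMul_inv_rowMul hU x]
      refine Finset.sum_congr rfl fun i _ => ?_
      rcases lt_or_ge (i : ℕ) l with hi | hi <;> simp [hi, hx i, not_lt.mpr]
    · conv_lhs => rw [← rowMul_rowMul_inv ((Matrix.isUnit_conjTranspose U).mpr hU) y]
      refine Finset.sum_congr rfl fun i _ => ?_
      rcases lt_or_ge (i : ℕ) l with hi | hi <;> simp [hi, hy i, not_lt.mpr]
  · rintro ⟨U, l, u, w, hU, -, hx, hy⟩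
    obtain rfl : x = rowMul _ U := funext hx
    obtain rfl : y = rowMul _ Uᴴ⁻¹ := funext hy
    rw [sum_rankOne_rowMul_conjTranspose_inv hU]
    refine Finset.sum_eq_zero fun i _ => ?_
    by_cases hi : (i : ℕ) < l <;> simp [hi, rankOne_eq_innerProductSpace_rankOne]
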